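/- Let β : ℝ → ℝ be monotone increasing and Lipschitz on bounded sets (for each M > 0 there is L_M with |β(y₁) - β(y₂)| ≤ L_M|y₁ - y₂| for y₁, y₂ ∈ [-M, M]), and directionally differentiable at every point. Let A ⊂ ℝ² be measurable with finite measure, ρ ∈ [1, ∞), and y, δy ∈ L^∞(A). Then ‖(β(y + τδy) - β(y))/τ - β'(y; δy)‖_{L^ρ(A)} → 0 as τ ↘ 0, where β'(y; δy)(x) := β'(y(x); δy(x)) is the pointwise directional derivative. -/

import Mathlib

/-!
On `A` the arguments `y x` and `y x + τ * dy x`, `τ ∈ (0, 1]`, stay in `[-M, M]` with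
`M = ‖y‖_∞ + ‖dy‖_∞ + 1`, so the Lipschitz constant of `β` there bounds the difference quotients
and their limit `β'(y; dy)` uniformly. The difference quotients converge pointwise, and dominated
convergence on the finite measure space `A` upgrades this to convergence in `L^ρ`.
-/

open Set MeasureTheory Filter ENNReal Topology

noncomputable section

theorem tendsto_eLpNorm_zero_of_tendsto_ae_of_bound {ι α E : Type*} [MeasurableSpace α]
    {μ : Measure α} [IsFiniteMeasure μ] [NormedAddCommGroup E] {l : Filter ι}
    [l.IsCountablyGenerated] {p : ℝ≥0∞} (hp : p ≠ ∞) {F : ι → α → E} (C : ℝ)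
    (hF_meas : ∀ᶠ i in l, AEStronglyMeasurable (F i) μ)
    (h_bound : ∀ᶠ i in l, ∀ᵐ a ∂μ, ‖F i a‖ ≤ C)
    (h_lim : ∀ᵐ a ∂μ, Tendsto (fun i => F i a) l (𝓝 0)) :
    Tendsto (fun i => eLpNorm (F i) p μ) l (𝓝 0) := by
  rcases eq_or_ne p 0 with rfl | hp0
  · simpa using tendsto_const_nhds
  have hpos : 0 < p.toReal := ENNReal.toReal_pos hp0 hp
  simp only [eLpNorm_eq_lintegral_rpow_enorm_toReal hp0 hp]
  have h_int : Tendsto (fun i => ∫⁻ a, ‖F i a‖ₑ ^ p.toReal ∂μ) l (𝓝 0) := by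
    have := tendsto_lintegral_filter_of_dominated_convergence' (μ := μ) (l := l)
      (F := fun i a => ‖F i a‖ₑ ^ p.toReal) (f := fun _ => 0)
      (fun _ => ENNReal.ofReal C ^ p.toReal) ?_ ?_ ?_ ?_
    · simpa using this
    · filter_upwards [hF_meas] with i hi using hi.enorm.pow_const _
    · filter_upwards [h_bound] with i hi
      filter_upwards [hi] with a ha
      rw [← ofReal_norm]
      gcongr
    · simp [lintegral_const, ENNReal.mul_ne_top, measure_ne_top]
    · filter_upwards [h_lim] with a ha
      simpa [Function.comp_def, ENNReal.zero_rpow_of_pos hpos] using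
        (((ENNReal.continuous_rpow_const (y := p.toReal)).comp continuous_enorm).tendsto 0).comp ha
  simpa [Function.comp_def, ENNReal.zero_rpow_of_pos (inv_pos.mpr hpos)] using
    ((ENNReal.continuous_rpow_const (y := 1 / p.toReal)).tendsto 0).comp h_int

theorem locallyLipschitz_of_forall_lipschitz_Icc {β : ℝ → ℝ}
    (hlip : ∀ M > (0 : ℝ), ∃ L > (0 : ℝ), ∀ y1 ∈ Icc (-M) M, ∀ y2 ∈ Icc (-M) M,
      |β y1 - β y2| ≤ L * |y1 - y2|) :
    LocallyLipschitz β := by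
  intro x
  obtain ⟨L, -, hL⟩ := hlip (|x| + 1) (by positivity)
  refine ⟨_, Icc (-(|x| + 1)) (|x| + 1), Icc_mem_nhds ?_ ?_, LipschitzOnWith.of_dist_le' hL⟩
  · linarith [neg_abs_le x]
  · linarith [le_abs_self x]

theorem abs_slope_le_of_lipschitz_Icc {β : ℝ → ℝ} {M L : ℝ}
    (hL : ∀ y1 ∈ Icc (-M) M, ∀ y2 ∈ Icc (-M) M, |β y1 - β y2| ≤ L * |y1 - y2|)
    {y dy τ : ℝ} (hM : |y| + |dy| ≤ M) (hτ : τ ∈ Ioc 0 1) :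
    |(β (y + τ * dy) - β y) / τ| ≤ L * |dy| := by
  obtain ⟨hτ0, hτ1⟩ := hτ
  have hτdy : |τ * dy| ≤ |dy| := by
    rw [abs_mul, abs_of_pos hτ0]
    exact mul_le_of_le_one_left (abs_nonneg _) hτ1
  have hy : y ∈ Icc (-M) M := abs_le.mp (by linarith [abs_nonneg dy])
  have hy' : y + τ * dy ∈ Icc (-M) M := abs_le.mp (by linarith [abs_add_le y (τ * dy)])
  rw [abs_div, abs_of_pos hτ0, div_le_iff₀ hτ0]
  calc |β (y + τ * dy) - β y| ≤ L * |y + τ * dy - y| := hL _ hy' _ hy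
    _ = L * |dy| * τ := by rw [add_sub_cancel_left, abs_mul, abs_of_pos hτ0]; ring

theorem abs_slope_sub_le_of_lipschitz_Icc {β : ℝ → ℝ} {M L : ℝ}
    (hL : ∀ y1 ∈ Icc (-M) M, ∀ y2 ∈ Icc (-M) M, |β y1 - β y2| ≤ L * |y1 - y2|)
    {y dy d τ : ℝ} (hM : |y| + |dy| ≤ M)
    (hd : Tendsto (fun τ : ℝ => (β (y + τ * dy) - β y) / τ) (𝓝[>] 0) (𝓝 d))
    (hτ : τ ∈ Ioc 0 1) :
    |(β (y + τ * dy) - β y) / τ - d| ≤ 2 * (L * |dy|) := by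
  have hd_le : |d| ≤ L * |dy| := le_of_tendsto hd.abs <|
    Filter.mem_of_superset (Ioc_mem_nhdsGT one_pos) fun _ ↦ abs_slope_le_of_lipschitz_Icc hL hM
  linarith [abs_sub _ _ |>.trans (add_le_add (abs_slope_le_of_lipschitz_Icc hL hM hτ) hd_le)]

theorem nemytskii_directionally_differentiable_general
    (β : ℝ → ℝ)
    (hlip : ∀ M > (0 : ℝ), ∃ L > (0 : ℝ), ∀ y1 ∈ Icc (-M) M, ∀ y2 ∈ Icc (-M) M,
      |β y1 - β y2| ≤ L * |y1 - y2|)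
    (β' : ℝ → ℝ → ℝ)
    (hdir : ∀ y dy : ℝ,
      Tendsto (fun τ : ℝ => (β (y + τ * dy) - β y) / τ)
        (nhdsWithin 0 (Ioi 0)) (nhds (β' y dy)))
    (A : Set (EuclideanSpace ℝ (Fin 2)))
    (hA : MeasurableSet A) (hAfin : volume A < ⊤)
    (ρ : ℝ)
    (y dy : EuclideanSpace ℝ (Fin 2) → ℝ)
    (hym : Measurable y) (hdym : Measurable dy)
    (My : ℝ) (hyb : ∀ x ∈ A, |y x| ≤ My)
    (Mdy : ℝ) (hdyb : ∀ x ∈ A, |dy x| ≤ Mdy) :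
    Tendsto (fun τ : ℝ =>
        eLpNorm (fun x => (β (y x + τ * dy x) - β (y x)) / τ - β' (y x) (dy x))
          (ENNReal.ofReal ρ) (volume.restrict A))
      (nhdsWithin 0 (Ioi 0)) (nhds 0) := by
  have : IsFiniteMeasure (volume.restrict A) := isFiniteMeasure_restrict.mpr hAfin.ne
  have hβ : Continuous β := (locallyLipschitz_of_forall_lipschitz_Icc hlip).continuous
  have h_slope_meas (τ : ℝ) : Measurable fun x => (β (y x + τ * dy x) - β (y x)) / τ := by
    fun_prop
  have h_deriv_meas : Measurable fun x => β' (y x) (dy x) :=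
    measurable_of_tendsto_metrizable' (𝓝[>] (0 : ℝ)) h_slope_meas
      (tendsto_pi_nhds.mpr fun x => hdir (y x) (dy x))
  obtain ⟨L, hL_pos, hL⟩ := hlip (|My| + |Mdy| + 1) (by positivity)
  refine tendsto_eLpNorm_zero_of_tendsto_ae_of_bound ofReal_ne_top (2 * (L * (|My| + |Mdy| + 1)))
    (.of_forall fun τ => ((h_slope_meas τ).sub h_deriv_meas).aestronglyMeasurable) ?_
    (.of_forall fun x => by simpa using (hdir (y x) (dy x)).sub_const (β' (y x) (dy x)))
  filter_upwards [Ioc_mem_nhdsGT one_pos] with τ hτ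
  refine ae_restrict_of_forall_mem hA fun x hx => ?_
  have hyx := (hyb x hx).trans (le_abs_self My)
  have hdyx := (hdyb x hx).trans (le_abs_self Mdy)
  calc _ ≤ 2 * (L * |dy x|) :=
        abs_slope_sub_le_of_lipschitz_Icc hL (by linarith) (hdir (y x) (dy x)) hτ
    _ ≤ 2 * (L * (|My| + |Mdy| + 1)) := by gcongr; linarith [abs_nonneg My]

/-- Directional differentiability of the Nemytskii operator
`β : L^∞(A) → L^ρ(A)` for a monotone, locally Lipschitz, directionally
differentiable `β : ℝ → ℝ`. -/
theorem nemytskii_directionally_differentiable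
    (β : ℝ → ℝ) (hmono : Monotone β)
    (hlip : ∀ M > (0 : ℝ), ∃ L > (0 : ℝ), ∀ y1 ∈ Icc (-M) M, ∀ y2 ∈ Icc (-M) M,
      |β y1 - β y2| ≤ L * |y1 - y2|)
    (β' : ℝ → ℝ → ℝ)
    (hdir : ∀ y dy : ℝ,
      Tendsto (fun τ : ℝ => (β (y + τ * dy) - β y) / τ)
        (nhdsWithin 0 (Ioi 0)) (nhds (β' y dy)))
    (A : Set (EuclideanSpace ℝ (Fin 2)))
    (hA : MeasurableSet A) (hAfin : volume A < ⊤)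
    (ρ : ℝ) (hρ : 1 ≤ ρ)
    (y dy : EuclideanSpace ℝ (Fin 2) → ℝ)
    (hym : Measurable y) (hdym : Measurable dy)
    (My : ℝ) (hyb : ∀ x ∈ A, |y x| ≤ My)
    (Mdy : ℝ) (hdyb : ∀ x ∈ A, |dy x| ≤ Mdy) :
    Tendsto (fun τ : ℝ =>
        eLpNorm (fun x => (β (y x + τ * dy x) - β (y x)) / τ - β' (y x) (dy x))
          (ENNReal.ofReal ρ) (volume.restrict A))
      (nhdsWithin 0 (Ioi 0)) (nhds 0) :=
  nemytskii_directionally_differentiable_general β hlip β' hdir A hA hAfin ρ y dy hym hdym My hyb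
    Mdy hdyb

end
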